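/- For every assignment problem and preference profile R, a deterministic assignment A satisfies favoring-eagerness-for-remaining-items (FERI) if and only if there exists a strict linear priority order ⊳ on the agents such that A is the output of the adaptive Boston mechanism ABM^⊳ applied to R. -/

import Mathlib

open Finset

noncomputable section

namespace FeriPaper

/-- A preference profile: `R j o o'` means agent `j` strictly prefers item `o` to `o'`. -/
abbrev Pref (n : ℕ) := Fin n → Fin n → Fin n → Prop

/-- Every agent's preference is a strict linear (total) order on the items. -/
def IsProfile {n : ℕ} (R : Pref n) : Prop :=
  ∀ j : Fin n, IsStrictTotalOrder (Fin n) (R j)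

/-- Profiles as a type (for mechanisms). -/
def Profile (n : ℕ) := { R : Pref n // IsProfile R }

/-- `o` is agent `j`'s most preferred item in the set `S`. -/
def IsTopIn {n : ℕ} (R : Pref n) (j : Fin n) (S : Set (Fin n)) (o : Fin n) : Prop :=
  o ∈ S ∧ ∀ o' ∈ S, o' ≠ o → R j o o'

/-- `Tunion R A r` is the union `T_1(A) ∪ ⋯ ∪ T_r(A)` (so `Tunion R A 0 = ∅`). -/
def Tunion {n : ℕ} (R : Pref n) (A : Equiv.Perm (Fin n)) : ℕ → Set (Fin n)
  | 0 => ∅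
  | r + 1 =>
      Tunion R A r ∪
        {o | ∃ j : Fin n, A j ∉ Tunion R A r ∧ IsTopIn R j (Tunion R A r)ᶜ o}

/-- `Tset R A r` is the set `T_{r+1}(A)` (0-based round index). -/
def Tset {n : ℕ} (R : Pref n) (A : Equiv.Perm (Fin n)) (r : ℕ) : Set (Fin n) :=
  {o | ∃ j : Fin n, A j ∉ Tunion R A r ∧ IsTopIn R j (Tunion R A r)ᶜ o}

/-- Favoring-eagerness-for-remaining-items (FERI). -/
def FERI {n : ℕ} (R : Pref n) (A : Equiv.Perm (Fin n)) : Prop :=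
  ∀ r : ℕ, ∀ o ∈ Tset R A r, IsTopIn R (A.symm o) (Tunion R A r)ᶜ o

/-- Pareto efficiency (PE) of a deterministic assignment. -/
def ParetoEff {n : ℕ} (R : Pref n) (A : Equiv.Perm (Fin n)) : Prop :=
  ¬ ∃ (A' : Equiv.Perm (Fin n)) (N' : Set (Fin n)), N'.Nonempty ∧
      (∀ j ∈ N', R j (A' j) (A j)) ∧ ∀ k, k ∉ N' → A' k = A k

/-- Number of agents receiving their overall first choice. -/
def firstChoiceCount {n : ℕ} (R : Pref n) (A : Equiv.Perm (Fin n)) : ℕ :=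
  {j : Fin n | IsTopIn R j Set.univ (A j)}.ncard

/-- First-choice maximality (FCM). -/
def FCM {n : ℕ} (R : Pref n) (A : Equiv.Perm (Fin n)) : Prop :=
  ¬ ∃ A' : Equiv.Perm (Fin n), firstChoiceCount R A < firstChoiceCount R A'

/-- Rank of item `o` in agent `j`'s preference (1 = most preferred). -/
def rank {n : ℕ} (R : Pref n) (j o : Fin n) : ℕ :=
  {o' : Fin n | R j o' o ∨ o' = o}.ncard

/-- Favoring-higher-ranks (FHR). -/
def FHR {n : ℕ} (R : Pref n) (A : Equiv.Perm (Fin n)) : Prop :=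
  ∀ j k : Fin n, rank R j (A j) ≤ rank R k (A j) ∨ rank R k (A k) < rank R k (A j)

/-- Popularity (POP). -/
def POP {n : ℕ} (R : Pref n) (A : Equiv.Perm (Fin n)) : Prop :=
  ¬ ∃ A' : Equiv.Perm (Fin n),
      {j : Fin n | R j (A j) (A' j)}.ncard < {j : Fin n | R j (A' j) (A j)}.ncard

/-- Signature of a deterministic assignment: `signature R A r` is the number of agents
    assigned their `r`-th ranked item. -/
def signature {n : ℕ} (R : Pref n) (A : Equiv.Perm (Fin n)) (r : ℕ) : ℕ :=
  {j : Fin n | rank R j (A j) = r}.ncard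

/-- `x` dominates `y` as signatures. -/
def SigDom (x y : ℕ → ℕ) : Prop :=
  ∃ r : ℕ, y r < x r ∧ ∀ r' < r, y r' ≤ x r'

/-- Rank maximality (RM). -/
def RM {n : ℕ} (R : Pref n) (A : Equiv.Perm (Fin n)) : Prop :=
  ¬ ∃ A' : Equiv.Perm (Fin n), SigDom (signature R A') (signature R A)

/-- A random assignment: a doubly stochastic matrix. -/
def DoublyStochastic {n : ℕ} (P : Fin n → Fin n → ℝ) : Prop :=
  (∀ j o, 0 ≤ P j o) ∧ (∀ j, ∑ o, P j o = 1) ∧ (∀ o, ∑ j, P j o = 1)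

/-- The 0-1 permutation matrix of a deterministic assignment. -/
def permMatrix {n : ℕ} (A : Equiv.Perm (Fin n)) : Fin n → Fin n → ℝ :=
  fun j o => if A j = o then 1 else 0

/-- Upper contour set of item `o` under the strict preference `pr`. -/
def ucs {n : ℕ} (pr : Fin n → Fin n → Prop) (o : Fin n) : Set (Fin n) :=
  {x | pr x o ∨ x = o}

/-- Total probability mass on the upper contour set of `o`. -/
def upperSum {n : ℕ} (pr : Fin n → Fin n → Prop) (p : Fin n → ℝ) (o : Fin n) : ℝ :=
  ∑ x, (ucs pr o).indicator p x

/-- `p` (weakly) stochastically dominates `q` w.r.t. the strict preference `pr`. -/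
def SD {n : ℕ} (pr : Fin n → Fin n → Prop) (p q : Fin n → ℝ) : Prop :=
  ∀ o, upperSum pr q o ≤ upperSum pr p o

/-- sd-envy-freeness. -/
def sdEF {n : ℕ} (R : Pref n) (P : Fin n → Fin n → ℝ) : Prop :=
  ∀ j k : Fin n, SD (R j) (P j) (P k)

/-- sd-weak-envy-freeness. -/
def sdWEF {n : ℕ} (R : Pref n) (P : Fin n → Fin n → ℝ) : Prop :=
  ∀ j k : Fin n, SD (R j) (P k) (P j) → P j = P k

/-- The common prefix of the preferences of agents `j` and `k`: items all of whose
    (weak) upper contour sets w.r.t. `j` coincide for `j` and `k`. -/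
def commonPrefix {n : ℕ} (R : Pref n) (j k : Fin n) : Set (Fin n) :=
  {o | ∀ x ∈ ucs (R j) o, ucs (R j) x = ucs (R k) x}

/-- Strong equal treatment of equals (SETE). -/
def SETE {n : ℕ} (R : Pref n) (P : Fin n → Fin n → ℝ) : Prop :=
  ∀ j k : Fin n, ∀ o ∈ commonPrefix R j k, P j o = P k o

/-- A random assignment satisfies a property `X` ex post if it is a convex combination
    of (permutation matrices of) deterministic assignments each satisfying `X`. -/
def ExPost {n : ℕ} (X : Equiv.Perm (Fin n) → Prop) (P : Fin n → Fin n → ℝ) : Prop :=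
  ∃ w : Equiv.Perm (Fin n) → ℝ, (∀ A, 0 ≤ w A) ∧ (∑ A, w A) = 1 ∧
    (∀ A, w A ≠ 0 → X A) ∧ ∀ j o, P j o = ∑ A, w A * permMatrix A j o

/-- Ex-ante favoring-higher-ranks (ea-FHR). -/
def EaFHR {n : ℕ} (R : Pref n) (P : Fin n → Fin n → ℝ) : Prop :=
  ∀ j o, 0 < P j o → ∀ k, rank R k o < rank R j o → upperSum (R k) (P k) o = 1

/-- The eating structure for ea-FERI: `(eaState R P r).1 = M_{P,r+1}` and
    `(eaState R P r).2 o = ⋃_{r' ≤ r+1} E_{P,r'}(o)` (1-based indexing on the right). -/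
def eaState {n : ℕ} (R : Pref n) (P : Fin n → Fin n → ℝ) :
    ℕ → Set (Fin n) × (Fin n → Set (Fin n))
  | 0 => (Set.univ, fun o => {j | IsTopIn R j Set.univ o})
  | r + 1 =>
      let prev := eaState R P r
      let M : Set (Fin n) := {o | ∑ k, (prev.2 o).indicator (fun k' => P k' o) k < 1}
      (M, fun o => prev.2 o ∪ {j | IsTopIn R j M o})

/-- `eaM R P r = M_{P,r+1}` (0-based round index). -/
def eaM {n : ℕ} (R : Pref n) (P : Fin n → Fin n → ℝ) (r : ℕ) : Set (Fin n) :=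
  (eaState R P r).1

/-- `eaE R P r o = E_{P,r+1}(o)` (0-based round index). -/
def eaE {n : ℕ} (R : Pref n) (P : Fin n → Fin n → ℝ) (r : ℕ) (o : Fin n) : Set (Fin n) :=
  {j | IsTopIn R j (eaM R P r) o}

/-- Ex-ante FERI (ea-FERI). -/
def EaFERI {n : ℕ} (R : Pref n) (P : Fin n → Fin n → ℝ) : Prop :=
  ∀ r : ℕ, ∀ o ∈ eaM R P r, ∀ j : Fin n, (∃ r' < r, j ∈ eaE R P r' o) →
    upperSum (R j) (P j) o = 1

/-- sd-Pareto-efficiency (sd-PE). -/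
def SdPE {n : ℕ} (R : Pref n) (P : Fin n → Fin n → ℝ) : Prop :=
  ¬ ∃ Q : Fin n → Fin n → ℝ, DoublyStochastic Q ∧ Q ≠ P ∧ ∀ j, SD (R j) (Q j) (P j)

/-- `A` is the output of the adaptive Boston mechanism with priority order `prio`
    (`prio j k` means `j` has higher priority than `k`): in every round, every item that
    receives applicants is assigned to its highest-priority applicant. -/
def ABMOutcome {n : ℕ} (prio : Fin n → Fin n → Prop) (R : Pref n)
    (A : Equiv.Perm (Fin n)) : Prop :=
  ∀ r : ℕ, ∀ o ∈ Tset R A r,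
    IsTopIn R (A.symm o) (Tunion R A r)ᶜ o ∧
      ∀ j : Fin n, A j ∉ Tunion R A r → IsTopIn R j (Tunion R A r)ᶜ o →
        j ≠ A.symm o → prio (A.symm o) j

end FeriPaper

namespace FeriPaper

section Aux

variable {n : ℕ}

lemma top_unique {R : Pref n} (hR : IsProfile R) {j : Fin n} {S : Set (Fin n)}
    {o o' : Fin n} (h1 : IsTopIn R j S o) (h2 : IsTopIn R j S o') : o = o' := by
  by_contra hne
  have h3 : R j o o' := h1.2 o' h2.1 (fun h => hne h.symm)
  have h4 : R j o' o := h2.2 o h1.1 hne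
  exact (hR j).irrefl o ((hR j).trans _ _ _ h3 h4)

lemma exists_top_finset {pr : Fin n → Fin n → Prop} (h : IsStrictTotalOrder (Fin n) pr)
    (s : Finset (Fin n)) (hs : s.Nonempty) :
    ∃ o ∈ s, ∀ o' ∈ s, o' ≠ o → pr o o' := by
  induction s using Finset.induction_on with
  | empty => exact absurd hs (by simp)
  | @insert a s ha ih =>
    rcases s.eq_empty_or_nonempty with rfl | hs'
    · refine ⟨a, Finset.mem_insert_self _ _, ?_⟩
      intro o' ho' hne
      simp only [Finset.mem_insert, Finset.notMem_empty, or_false] at ho'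
      exact absurd ho' hne
    · obtain ⟨o, hoS, hot⟩ := ih hs'
      rcases (show pr a o ∨ a = o ∨ pr o a from or_iff_not_imp_left.2 fun h1 => or_iff_not_imp_right.2 fun h2 => h.trichotomous a o h1 h2) with hao | rfl | hoa
      · refine ⟨a, Finset.mem_insert_self _ _, ?_⟩
        intro o' ho' hne
        rcases Finset.mem_insert.1 ho' with rfl | ho's
        · exact absurd rfl hne
        · rcases eq_or_ne o' o with rfl | h'
          · exact hao
          · exact h.trans _ _ _ hao (hot o' ho's h')
      · exact absurd hoS ha
      · refine ⟨o, Finset.mem_insert_of_mem hoS, ?_⟩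
        intro o' ho' hne
        rcases Finset.mem_insert.1 ho' with rfl | ho's
        · exact hoa
        · exact hot o' ho's hne

lemma exists_top {pr : Fin n → Fin n → Prop} (h : IsStrictTotalOrder (Fin n) pr)
    (S : Set (Fin n)) (hS : S.Nonempty) :
    ∃ o ∈ S, ∀ o' ∈ S, o' ≠ o → pr o o' := by
  obtain ⟨o, ho, hot⟩ := exists_top_finset h S.toFinite.toFinset
    (by simpa [Set.Finite.toFinset] using hS)
  refine ⟨o, by simpa using ho, fun o' ho' hne => hot o' (by simpa using ho') hne⟩

lemma tunion_succ (R : Pref n) (A : Equiv.Perm (Fin n)) (r : ℕ) :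
    Tunion R A (r + 1) = Tunion R A r ∪ Tset R A r := rfl

lemma tunion_mono (R : Pref n) (A : Equiv.Perm (Fin n)) {r s : ℕ} (h : r ≤ s) :
    Tunion R A r ⊆ Tunion R A s := by
  induction s with
  | zero => simp_all
  | succ s ih =>
    rcases Nat.lt_or_ge r (s + 1) with h' | h'
    · exact (ih (Nat.lt_succ_iff.1 h')).trans (by rw [tunion_succ]; exact Set.subset_union_left)
    · have : r = s + 1 := le_antisymm h h'
      subst this; exact subset_rfl

lemma tset_not_mem {R : Pref n} {A : Equiv.Perm (Fin n)} {r : ℕ} {o : Fin n}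
    (ho : o ∈ Tset R A r) : o ∉ Tunion R A r := by
  obtain ⟨j, _, htop⟩ := ho
  exact htop.1

lemma tunion_univ (R : Pref n) (hR : IsProfile R) (A : Equiv.Perm (Fin n)) :
    Tunion R A n = Set.univ := by
  have key : ∀ r : ℕ, Tunion R A r = Set.univ ∨ r ≤ (Tunion R A r).ncard := by
    intro r
    induction r with
    | zero => right; exact Nat.zero_le _
    | succ r ih =>
      rcases ih with h | h
      · left
        apply Set.eq_univ_of_univ_subset
        rw [← h]; exact tunion_mono R A (Nat.le_succ r)
      · rcases eq_or_ne (Tunion R A r) Set.univ with h' | h'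
        · left
          apply Set.eq_univ_of_univ_subset
          rw [← h']; exact tunion_mono R A (Nat.le_succ r)
        · right
          -- Tset R A r is nonempty, disjoint from Tunion R A r
          obtain ⟨o, ho⟩ : (Tunion R A r)ᶜ.Nonempty := by
            rw [Set.nonempty_compl]; exact h'
          obtain ⟨t, ht, htop⟩ := exists_top (hR (A.symm o)) (Tunion R A r)ᶜ ⟨o, ho⟩
          have htset : t ∈ Tset R A r :=
            ⟨A.symm o, by simpa using ho, ht, htop⟩
          have hstrict : Tunion R A r ⊂ Tunion R A (r + 1) := by
            rw [tunion_succ]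
            refine ⟨Set.subset_union_left, fun hsub => ?_⟩
            exact (tset_not_mem htset) (hsub (Set.mem_union_right _ htset))
          have := Set.ncard_lt_ncard hstrict (Set.toFinite _)
          omega
  rcases key n with h | h
  · exact h
  exact Set.eq_of_subset_of_ncard_le (Set.subset_univ _)
    (by rwa [Set.ncard_univ, Nat.card_eq_fintype_card, Fintype.card_fin]) (Set.toFinite _)

/-- Round at which item `o` is assigned. -/
def roundOf (R : Pref n) (A : Equiv.Perm (Fin n)) (o : Fin n) : ℕ :=
  sInf {r | o ∈ Tunion R A (r + 1)}

lemma roundOf_set_nonempty (R : Pref n) (hR : IsProfile R) (A : Equiv.Perm (Fin n))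
    (o : Fin n) : {r | o ∈ Tunion R A (r + 1)}.Nonempty := by
  refine ⟨n, ?_⟩
  have := tunion_univ R hR A
  have hmem : o ∈ Tunion R A n := by rw [this]; trivial
  exact tunion_mono R A (Nat.le_succ n) hmem

lemma roundOf_eq {R : Pref n} {A : Equiv.Perm (Fin n)} {r : ℕ} {o : Fin n}
    (ho : o ∈ Tset R A r) : roundOf R A o = r := by
  have hmem : r ∈ {r | o ∈ Tunion R A (r + 1)} := by
    simp only [Set.mem_setOf_eq, tunion_succ]
    exact Set.mem_union_right _ ho
  have hle : roundOf R A o ≤ r := Nat.sInf_le hmem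
  have hsm := Nat.sInf_mem ⟨r, hmem⟩
  simp only [Set.mem_setOf_eq] at hsm
  rcases Nat.lt_or_ge (roundOf R A o) r with hlt | hge
  · exfalso
    exact tset_not_mem ho (tunion_mono R A (by omega : roundOf R A o + 1 ≤ r) hsm)
  · omega

lemma roundOf_gt {R : Pref n} (hR : IsProfile R) {A : Equiv.Perm (Fin n)} {r : ℕ}
    {o : Fin n} (h : o ∉ Tunion R A (r + 1)) : r < roundOf R A o := by
  have hsm := Nat.sInf_mem (roundOf_set_nonempty R hR A o)
  simp only [Set.mem_setOf_eq] at hsm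
  by_contra hle
  push_neg at hle
  exact h (tunion_mono R A (by omega : roundOf R A o + 1 ≤ r + 1) hsm)

end Aux

/-- A deterministic assignment satisfies FERI iff it is the output of the
adaptive Boston mechanism for some strict linear priority order over the agents. -/
theorem feri_iff_abm {n : ℕ} (R : Pref n) (hR : IsProfile R) (A : Equiv.Perm (Fin n)) :
    FERI R A ↔
      ∃ prio : Fin n → Fin n → Prop,
        IsStrictTotalOrder (Fin n) prio ∧ ABMOutcome prio R A := by
  constructor
  · intro hferi
    set f : Fin n → ℕ := fun j => roundOf R A (A j) with hf
    refine ⟨fun j k => f j < f k ∨ (f j = f k ∧ j < k), ?_, ?_⟩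
    · refine { trichotomous := ?_, irrefl := ?_, trans := ?_ }
      · intro j k hjk hkj
        rcases lt_trichotomy (f j) (f k) with h | h | h
        · exact absurd (Or.inl h) hjk
        · rcases lt_trichotomy j k with h' | h' | h'
          · exact absurd (Or.inr ⟨h, h'⟩) hjk
          · exact h'
          · exact absurd (Or.inr ⟨h.symm, h'⟩) hkj
        · exact absurd (Or.inl h) hkj
      · intro j h
        rcases h with h | ⟨_, h⟩
        · exact lt_irrefl _ h
        · exact lt_irrefl _ h
      · rintro j k l (h1 | ⟨h1, h1'⟩) (h2 | ⟨h2, h2'⟩)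
        · exact Or.inl (h1.trans h2)
        · exact Or.inl (h2 ▸ h1)
        · exact Or.inl (h1 ▸ h2)
        · exact Or.inr ⟨h1.trans h2, h1'.trans h2'⟩
    · intro r o ho
      refine ⟨hferi r o ho, ?_⟩
      intro j hj htop hne
      -- A j is not assigned in round r
      have hAj : A j ∉ Tset R A r := by
        intro hmem
        have := hferi r (A j) hmem
        rw [Equiv.symm_apply_apply] at this
        have heq : A j = o := top_unique hR this htop
        apply hne
        rw [← heq, Equiv.symm_apply_apply]
      have hAj' : A j ∉ Tunion R A (r + 1) := by
        rw [tunion_succ]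
        rintro (h | h)
        · exact hj h
        · exact hAj h
      have h1 : f (A.symm o) = r := by
        simp only [hf, Equiv.apply_symm_apply]
        exact roundOf_eq ho
      have h2 : r < f j := roundOf_gt hR hAj'
      exact Or.inl (by omega)
  · rintro ⟨prio, _, habm⟩
    intro r o ho
    exact (habm r o ho).1

end FeriPaper
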